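/- arXiv:1108.0026 — 4 statements merged into one kernel-verified Lean document; each statement's English description precedes it below -/
import Mathlib

section
/- Let (Ω, F, P) be a complete probability space, D ⊂ ℝⁿ open, p > 1, k ∈ {1,…,n}, f, g ∈ L^p(D × Ω), and let (h_m) be a sequence of nonzero real numbers with h_m → 0. Suppose that for every smooth compactly supported φ : D → ℝ and every bounded measurable X : Ω → ℝ one has ∬_{D×Ω} (Δ_{k,h_m} f(x,ω) − g(x,ω)) φ(x) X(ω) dx dP(ω) → 0 as m → ∞ (for m so large that |h_m| < dist(supp φ, ∂D)). Then for every smooth compactly supported φ : D → ℝ one has, with probability one, ∫_D f(x,ω) ∂_k φ(x) dx = −∫_D g(x,ω) φ(x) dx; i.e. g is the weak derivative of f in direction k with probability one. -/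
/-!
Translating by `t e_k` moves the difference quotient from `f` onto the test function:
`∬ Δ_{k,t} f · φ X = -∬ f · Δ_{k,-t} φ · X`. Since `φ` is Lipschitz, the quotients `Δ_{k,-t} φ`
are uniformly bounded, supported in a fixed compact subset of `D` for small `t`, and converge
pointwise to `∂_k φ`; dominated convergence turns the hypothesis into
`∬ (f ∂_k φ + g φ) X = 0` for every bounded random variable `X`. Testing with `X = 1_A` shows
that `ω ↦ ∫_D (f ∂_k φ + g φ)(x, ω) dx` vanishes almost surely.
-/

open MeasureTheory Set Filter
open scoped ENNReal Topology

/-- A smooth compactly supported test function with support contained in `D`. -/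
def IsTest {E F : Type*} [NormedAddCommGroup E] [NormedSpace ℝ E]
    [NormedAddCommGroup F] [NormedSpace ℝ F] (D : Set E) (φ : E → F) : Prop :=
  ContDiff ℝ (⊤ : ℕ∞) φ ∧ HasCompactSupport φ ∧ tsupport φ ⊆ D

/-- `k`-th partial derivative of a scalar function on `ℝⁿ`. -/
noncomputable def pder {n : ℕ} (k : Fin n) (φ : EuclideanSpace ℝ (Fin n) → ℝ)
    (x : EuclideanSpace ℝ (Fin n)) : ℝ :=
  fderiv ℝ φ x (EuclideanSpace.single k 1)

/-- Finite difference quotient (in the space variable) in direction `e_k` with step `h`,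
for a random field `f : D × Ω → ℝ`. -/
noncomputable def diffQuotR {n : ℕ} {Ω : Type*} (k : Fin n) (h : ℝ)
    (f : EuclideanSpace ℝ (Fin n) × Ω → ℝ) (q : EuclideanSpace ℝ (Fin n) × Ω) : ℝ :=
  (f (q.1 + h • EuclideanSpace.single k 1, q.2) - f q) / h

open Metric
open scoped NNReal

section DiffQuot

variable {E : Type*} [NormedAddCommGroup E] [NormedSpace ℝ E]

noncomputable def diffQuot (v : E) (t : ℝ) (φ : E → ℝ) (x : E) : ℝ :=
  (φ (x + t • v) - φ x) / t

theorem tendsto_diffQuot {φ : E → ℝ} {x : E} (hφ : DifferentiableAt ℝ φ x) (v : E) :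
    Tendsto (fun t => diffQuot v t φ x) (𝓝[≠] 0) (𝓝 (fderiv ℝ φ x v)) := by
  have hline : HasDerivAt (fun t : ℝ => x + t • v) v 0 := by
    simpa using ((hasDerivAt_id (0 : ℝ)).smul_const v).const_add x
  have hφ' : HasFDerivAt φ (fderiv ℝ φ x) (x + (0 : ℝ) • v) := by simpa using hφ.hasFDerivAt
  simpa [diffQuot, div_eq_inv_mul] using (hφ'.comp_hasDerivAt 0 hline).tendsto_slope_zero

theorem abs_diffQuot_le {φ : E → ℝ} {L : ℝ≥0} (hφ : LipschitzWith L φ) (v : E) (t : ℝ) (x : E) :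
    |diffQuot v t φ x| ≤ L * ‖v‖ := by
  rw [diffQuot, abs_div]
  refine div_le_of_le_mul₀ (abs_nonneg t) (by positivity) ?_
  calc |φ (x + t • v) - φ x| ≤ L * dist (x + t • v) x := hφ.dist_le_mul _ _
    _ = L * ‖v‖ * |t| := by
      rw [dist_eq_norm, add_sub_cancel_left, norm_smul, Real.norm_eq_abs]; ring

theorem diffQuot_eq_zero_of_notMem_cthickening {φ : E → ℝ} {v : E} {t δ : ℝ}
    (ht : |t| * ‖v‖ ≤ δ) {x : E} (hx : x ∉ cthickening δ (tsupport φ)) :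
    diffQuot v t φ x = 0 := by
  have hφx : φ x = 0 :=
    image_eq_zero_of_notMem_tsupport fun h => hx (self_subset_cthickening _ h)
  have hφxt : φ (x + t • v) = 0 := image_eq_zero_of_notMem_tsupport fun h =>
    hx (mem_cthickening_of_dist_le x _ δ _ h (by
      rwa [dist_eq_norm, sub_add_cancel_left, norm_neg, norm_smul, Real.norm_eq_abs]))
  simp [diffQuot, hφx, hφxt]

theorem continuous_diffQuot {φ : E → ℝ} (hφ : Continuous φ) (v : E) (t : ℝ) :
    Continuous (diffQuot v t φ) :=
  ((hφ.comp (continuous_add_const _)).sub hφ).div_const t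

end DiffQuot

section Integrability

variable {α : Type*} [MeasurableSpace α] {μ : Measure α}

theorem integrable_mul_of_integrableOn {f c : α → ℝ} {S : Set α} (hf : IntegrableOn f S μ)
    (hc : AEStronglyMeasurable c μ) {C : ℝ} (hcC : ∀ x, |c x| ≤ C) (hcS : ∀ x ∉ S, c x = 0) :
    Integrable (fun x => f x * c x) μ :=
  IntegrableOn.integrable_of_forall_notMem_eq_zero (hf.mul_bdd hc.restrict (ae_of_all _ hcC))
    fun x hx => by simp [hcS x hx]

theorem tendsto_integral_mul_of_integrableOn {ι : Type*} {l : Filter ι} [l.IsCountablyGenerated]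
    {f : α → ℝ} {S : Set α} (hf : IntegrableOn f S μ) {c : ι → α → ℝ} {c₀ : α → ℝ}
    (hc : ∀ i, AEStronglyMeasurable (c i) μ) {C : ℝ} (hcC : ∀ i x, |c i x| ≤ C)
    (hcS : ∀ᶠ i in l, ∀ x ∉ S, c i x = 0) (hc₀S : ∀ x ∉ S, c₀ x = 0)
    (hlim : ∀ x, Tendsto (fun i => c i x) l (𝓝 (c₀ x))) :
    Tendsto (fun i => ∫ x, f x * c i x ∂μ) l (𝓝 (∫ x, f x * c₀ x ∂μ)) := by
  have hrestrict : ∀ {c : α → ℝ}, (∀ x ∉ S, c x = 0) →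
      ∫ x in S, f x * c x ∂μ = ∫ x, f x * c x ∂μ := fun hcS =>
    setIntegral_eq_integral_of_forall_compl_eq_zero fun x hx => by simp [hcS x hx]
  rw [← hrestrict hc₀S]
  refine Tendsto.congr' (hcS.mono fun i hi => hrestrict hi) ?_
  refine tendsto_integral_filter_of_dominated_convergence (fun x => ‖f x‖ * C)
    (.of_forall fun i => hf.aestronglyMeasurable.mul (hc i).restrict)
    (.of_forall fun i => ae_of_all _ fun x => ?_) (hf.norm.mul_const C)
    (ae_of_all _ fun x => (hlim x).const_mul (f x))
  rw [norm_mul]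
  exact mul_le_mul_of_nonneg_left (hcC i x) (norm_nonneg _)

end Integrability

section ProductSpace

variable {α Ω : Type*} [MeasurableSpace α] [TopologicalSpace α] [MeasurableSpace Ω]
  {μ : Measure α} [IsFiniteMeasureOnCompacts μ] {P : Measure Ω} [IsFiniteMeasure P]
  {D : Set α} {p : ℝ≥0∞} {f : α × Ω → ℝ}

theorem integrableOn_prod_univ_of_memLp (hp : 1 ≤ p) (hf : MemLp f p ((μ.restrict D).prod P))
    {K : Set α} (hK : IsCompact K) : IntegrableOn f (K ×ˢ univ) ((μ.restrict D).prod P) := by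
  have : IsFiniteMeasure (((μ.restrict D).prod P).restrict (K ×ˢ univ)) := by
    refine isFiniteMeasure_restrict.2 ?_
    rw [Measure.prod_prod]
    exact ENNReal.mul_ne_top ((Measure.restrict_apply_le D K).trans_lt hK.measure_lt_top).ne
      (measure_ne_top P univ)
  exact (hf.restrict _).integrable hp

theorem integrable_mul_of_hasCompactSupport [OpensMeasurableSpace α] (hp : 1 ≤ p)
    (hf : MemLp f p ((μ.restrict D).prod P)) {b : α → ℝ} (hb : Continuous b)
    (hbc : HasCompactSupport b) {X : Ω → ℝ} (hX : Measurable X) (hXC : ∃ C, ∀ ω, |X ω| ≤ C) :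
    Integrable (fun q => f q * (b q.1 * X q.2)) ((μ.restrict D).prod P) := by
  obtain ⟨Cb, hCb⟩ := hbc.exists_bound_of_continuous hb
  obtain ⟨CX, hCX⟩ := hXC
  refine integrable_mul_of_integrableOn (integrableOn_prod_univ_of_memLp hp hf hbc.isCompact)
    ((hb.measurable.comp measurable_fst).mul (hX.comp measurable_snd)).aestronglyMeasurable
    (C := Cb * CX) (fun q => ?_) (fun q hq => ?_)
  · rw [abs_mul]
    exact mul_le_mul (hCb q.1) (hCX q.2) (abs_nonneg _) ((norm_nonneg _).trans (hCb q.1))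
  · simp [image_eq_zero_of_notMem_tsupport fun h => hq (mk_mem_prod h (mem_univ q.2))]

end ProductSpace

section Translation

variable {E Ω : Type*} [AddGroup E] [MeasurableSpace E] [MeasurableAdd E] [MeasurableSpace Ω]
  {μ : Measure E} [μ.IsAddRightInvariant] [SFinite μ] {P : Measure Ω} [SFinite P] {D : Set E}

theorem integral_comp_add_fst_mul_eq (hD : MeasurableSet D) (v : E) {u c : E × Ω → ℝ}
    (hcD : ∀ q, c q ≠ 0 → q.1 ∈ D ∧ q.1 + v ∈ D) :
    (Integrable (fun q => u (q.1 + v, q.2) * c q) ((μ.restrict D).prod P) ↔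
      Integrable (fun q => u q * c (q.1 - v, q.2)) ((μ.restrict D).prod P)) ∧
    ∫ q, u (q.1 + v, q.2) * c q ∂((μ.restrict D).prod P) =
      ∫ q, u q * c (q.1 - v, q.2) ∂((μ.restrict D).prod P) := by
  set S := D ×ˢ (univ : Set Ω)
  have hS : MeasurableSet S := hD.prod .univ
  have hν : (μ.restrict D).prod P = (μ.prod P).restrict S := by
    rw [← Measure.prod_restrict, Measure.restrict_univ]
  let τ : E × Ω ≃ᵐ E × Ω := (MeasurableEquiv.addRight v).prodCongr (MeasurableEquiv.refl Ω)
  have hτ : MeasurePreserving τ (μ.prod P) (μ.prod P) :=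
    (measurePreserving_add_right μ v).prod (.id P)
  have hind : S.indicator (fun q => u (q.1 + v, q.2) * c q) =
      S.indicator (fun q => u q * c (q.1 - v, q.2)) ∘ τ := by
    ext q
    change _ = S.indicator _ (q.1 + v, q.2)
    by_cases hc : c q = 0
    · simp [indicator, hc]
    · obtain ⟨h1, h2⟩ := hcD q hc
      simp [S, h1, h2]
  rw [hν]
  change (IntegrableOn _ S _ ↔ IntegrableOn _ S _) ∧ _
  rw [← integrable_indicator_iff hS, ← integrable_indicator_iff hS, ← integral_indicator hS,
    ← integral_indicator hS, hind]
  exact ⟨hτ.integrable_comp_emb τ.measurableEmbedding, hτ.integral_comp' _⟩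

end Translation

section DiscreteIntegrationByParts

variable {E Ω : Type*} [NormedAddCommGroup E] [NormedSpace ℝ E] [MeasurableSpace E]
  [MeasurableAdd E] [MeasurableSpace Ω] {μ : Measure E} [μ.IsAddRightInvariant] [SFinite μ]
  {P : Measure Ω} [SFinite P] {D : Set E}

theorem integral_diffQuot_mul_eq (hD : MeasurableSet D) {u : E × Ω → ℝ} {v : E} {t : ℝ}
    {b : E → ℝ} {X : Ω → ℝ} (hbD : ∀ x, b x ≠ 0 → x ∈ D ∧ x + t • v ∈ D)
    (hu : Integrable (fun q => u q * (b q.1 * X q.2)) ((μ.restrict D).prod P))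
    (hu' : Integrable (fun q => u q * (b (q.1 - t • v) * X q.2)) ((μ.restrict D).prod P)) :
    Integrable (fun q => (u (q.1 + t • v, q.2) - u q) / t * (b q.1 * X q.2))
      ((μ.restrict D).prod P) ∧
    ∫ q, (u (q.1 + t • v, q.2) - u q) / t * (b q.1 * X q.2) ∂((μ.restrict D).prod P) =
      -∫ q, u q * (diffQuot v (-t) b q.1 * X q.2) ∂((μ.restrict D).prod P) := by
  obtain ⟨hshift_int, hshift⟩ := integral_comp_add_fst_mul_eq (μ := μ) (P := P) hD (t • v)
    (u := u) (c := fun q => b q.1 * X q.2) fun q hq => hbD q.1 (left_ne_zero_of_mul hq)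
  have hu₁ := hshift_int.2 hu'
  have hquot : ∀ q : E × Ω, (u (q.1 + t • v, q.2) - u q) / t * (b q.1 * X q.2) =
      (u (q.1 + t • v, q.2) * (b q.1 * X q.2) - u q * (b q.1 * X q.2)) / t := fun q => by ring
  have hdq : ∀ q : E × Ω, u q * (diffQuot v (-t) b q.1 * X q.2) =
      -((u q * (b (q.1 - t • v) * X q.2) - u q * (b q.1 * X q.2)) / t) := fun q => by
    simp only [diffQuot, neg_smul, ← sub_eq_add_neg]; ring
  simp_rw [hquot, hdq]
  refine ⟨(hu₁.sub hu).div_const t, ?_⟩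
  rw [integral_neg, neg_neg, integral_div, integral_div, integral_sub hu₁ hu,
    integral_sub hu' hu, hshift]

end DiscreteIntegrationByParts

section WeakLimit

variable {E Ω : Type*} [NormedAddCommGroup E] [NormedSpace ℝ E] [ProperSpace E]
  [MeasurableSpace E] [BorelSpace E] [MeasurableSpace Ω]
  {μ : Measure E} [μ.IsAddRightInvariant] [IsFiniteMeasureOnCompacts μ]
  {P : Measure Ω} [IsFiniteMeasure P] {D : Set E} {p : ℝ≥0∞} {φ : E → ℝ} {X : Ω → ℝ}

theorem tendsto_integral_diffQuot_mul (hD : IsOpen D) (hp : 1 ≤ p) {u : E × Ω → ℝ}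
    (hu : MemLp u p ((μ.restrict D).prod P)) (hφ : ContDiff ℝ 1 φ) (hφc : HasCompactSupport φ)
    (hφD : tsupport φ ⊆ D) (hX : Measurable X) (hXC : ∃ C, ∀ ω, |X ω| ≤ C) (v : E)
    {ι : Type*} {l : Filter ι} [l.IsCountablyGenerated] {t : ι → ℝ}
    (ht : Tendsto t l (𝓝[≠] 0)) :
    (∀ᶠ i in l, Integrable (fun q => (u (q.1 + t i • v, q.2) - u q) / t i * (φ q.1 * X q.2))
      ((μ.restrict D).prod P)) ∧
    Tendsto (fun i => ∫ q, (u (q.1 + t i • v, q.2) - u q) / t i * (φ q.1 * X q.2)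
      ∂((μ.restrict D).prod P)) l
      (𝓝 (-∫ q, u q * (fderiv ℝ φ q.1 v * X q.2) ∂((μ.restrict D).prod P))) := by
  obtain ⟨ε, hε, hεD⟩ := hφc.exists_thickening_subset_open hD hφD
  set K := cthickening (ε / 2) (tsupport φ)
  have hKD : K ⊆ D := (cthickening_subset_thickening' hε (half_lt_self hε) _).trans hεD
  have ht₀ := tendsto_nhdsWithin_iff.1 ht
  have hsmall : ∀ᶠ i in l, |t i| * ‖v‖ ≤ ε / 2 := by
    have : Tendsto (fun i => |t i| * ‖v‖) l (𝓝 0) := by simpa using ht₀.1.abs.mul_const ‖v‖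
    exact this.eventually (ge_mem_nhds (half_pos hε))
  have hibp := hsmall.mono fun i hi => by
    refine integral_diffQuot_mul_eq (v := v) (t := t i) hD.measurableSet (fun x hx => ?_)
      (integrable_mul_of_hasCompactSupport hp hu hφ.continuous hφc hX hXC)
      (integrable_mul_of_hasCompactSupport hp hu (hφ.continuous.comp (continuous_sub_right _))
        (hφc.comp_homeomorph (Homeomorph.subRight _)) hX hXC)
    have hx' := subset_tsupport φ hx
    exact ⟨hφD hx', hKD (mem_cthickening_of_dist_le _ x _ _ hx' (by
      simpa [dist_eq_norm, norm_smul] using hi))⟩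
  refine ⟨hibp.mono fun i hi => hi.1, ?_⟩
  obtain ⟨L, hL⟩ := hφ.lipschitzWith_of_hasCompactSupport hφc one_ne_zero
  obtain ⟨CX, hCX⟩ := hXC
  have hneg : Tendsto (fun i => -t i) l (𝓝[≠] 0) := tendsto_nhdsWithin_iff.2
    ⟨by simpa using ht₀.1.neg, ht₀.2.mono fun i hi => neg_ne_zero.2 hi⟩
  refine (tendsto_integral_mul_of_integrableOn
    (integrableOn_prod_univ_of_memLp (K := K) hp hu hφc.isCompact.cthickening)
    (c := fun i q => diffQuot v (-t i) φ q.1 * X q.2) (C := L * ‖v‖ * CX)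
    (fun i => (((continuous_diffQuot hφ.continuous v _).measurable.comp measurable_fst).mul
      (hX.comp measurable_snd)).aestronglyMeasurable)
    (fun i q => ?_) (hsmall.mono fun i hi q hq => ?_) (fun q hq => ?_)
    (fun q => ((tendsto_diffQuot (hφ.differentiable one_ne_zero q.1) v).comp hneg).mul_const
      (X q.2))).neg.congr' (hibp.mono fun i hi => hi.2.symm)
  · rw [abs_mul]
    exact mul_le_mul (abs_diffQuot_le hL v _ _) (hCX q.2) (abs_nonneg _) (by positivity)
  · rw [diffQuot_eq_zero_of_notMem_cthickening (by rwa [abs_neg]) fun h => hq ⟨h, mem_univ _⟩,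
      zero_mul]
  · have hq' : q.1 ∉ tsupport φ := fun h => hq ⟨self_subset_cthickening _ h, mem_univ _⟩
    rw [Function.notMem_support.1 fun h => hq' (support_fderiv_subset ℝ h),
      zero_apply, zero_mul]


theorem integral_fderiv_mul_add_mul_eq_zero (hD : IsOpen D) (hp : 1 ≤ p) {u w : E × Ω → ℝ}
    (hu : MemLp u p ((μ.restrict D).prod P)) (hw : MemLp w p ((μ.restrict D).prod P))
    (hφ : ContDiff ℝ 1 φ) (hφc : HasCompactSupport φ) (hφD : tsupport φ ⊆ D)
    (hX : Measurable X) (hXC : ∃ C, ∀ ω, |X ω| ≤ C) (v : E)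
    {ι : Type*} {l : Filter ι} [l.IsCountablyGenerated] [l.NeBot] {t : ι → ℝ}
    (ht : Tendsto t l (𝓝[≠] 0))
    (hconv : Tendsto (fun i => ∫ q, ((u (q.1 + t i • v, q.2) - u q) / t i - w q) * φ q.1 * X q.2
      ∂((μ.restrict D).prod P)) l (𝓝 0)) :
    ∫ q, (u q * fderiv ℝ φ q.1 v + w q * φ q.1) * X q.2 ∂((μ.restrict D).prod P) = 0 := by
  obtain ⟨hIu, hlim⟩ := tendsto_integral_diffQuot_mul hD hp hu hφ hφc hφD hX hXC v ht
  have hIw := integrable_mul_of_hasCompactSupport hp hw hφ.continuous hφc hX hXC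
  have hIu' := integrable_mul_of_hasCompactSupport hp hu
    ((hφ.continuous_fderiv one_ne_zero).clm_apply continuous_const) (hφc.fderiv_apply ℝ v) hX hXC
  have hlim' : Tendsto (fun i => ∫ q, ((u (q.1 + t i • v, q.2) - u q) / t i - w q) * φ q.1 * X q.2
      ∂((μ.restrict D).prod P)) l (𝓝 (-∫ q, u q * (fderiv ℝ φ q.1 v * X q.2)
        ∂((μ.restrict D).prod P) - ∫ q, w q * (φ q.1 * X q.2) ∂((μ.restrict D).prod P))) := by
    refine (hlim.sub_const _).congr' (hIu.mono fun i hi => ?_)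
    simp_rw [sub_mul, mul_assoc]
    exact (integral_sub hi hIw).symm
  have := tendsto_nhds_unique hlim' hconv
  simp_rw [add_mul, mul_assoc]
  rw [integral_add hIu' hIw]
  linarith

end WeakLimit

theorem ae_integral_eq_zero_of_forall_integral_mul_indicator_eq_zero {α Ω : Type*}
    [MeasurableSpace α] [MeasurableSpace Ω] {μ : Measure α} [SFinite μ] {P : Measure Ω}
    [SFinite P] {F : α × Ω → ℝ} (hF : Integrable F (μ.prod P))
    (hFs : ∀ s, MeasurableSet s → ∫ q, F q * s.indicator 1 q.2 ∂(μ.prod P) = 0) :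
    ∀ᵐ ω ∂P, ∫ x, F (x, ω) ∂μ = 0 := by
  refine hF.integral_prod_right.ae_eq_zero_of_forall_setIntegral_eq_zero fun s hs _ => ?_
  have hFs' : Integrable (fun q => F q * s.indicator 1 q.2) (μ.prod P) :=
    hF.mul_bdd ((measurable_one.indicator hs).comp measurable_snd).aestronglyMeasurable
      (c := 1) (ae_of_all _ fun q => by by_cases h : q.2 ∈ s <;> simp [h])
  rw [← hFs s hs, integral_prod_symm _ hFs', ← integral_indicator hs]
  congr 1 with ω
  by_cases hω : ω ∈ s <;> simp [hω]

theorem weak_derivative_of_diff_quotients_random_general {n : ℕ} {Ω : Type*}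
    [MeasurableSpace Ω] (P : Measure Ω) [IsProbabilityMeasure P]
    (D : Set (EuclideanSpace ℝ (Fin n))) (hD : IsOpen D)
    (p : ℝ) (hp : 1 < p) (k : Fin n)
    (f g : EuclideanSpace ℝ (Fin n) × Ω → ℝ)
    (hf : MemLp f (ENNReal.ofReal p) ((volume.restrict D).prod P))
    (hg : MemLp g (ENNReal.ofReal p) ((volume.restrict D).prod P))
    (h : ℕ → ℝ) (hh0 : ∀ m, h m ≠ 0) (hhlim : Tendsto h atTop (𝓝 0))
    (hconv : ∀ φ : EuclideanSpace ℝ (Fin n) → ℝ, IsTest D φ →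
      ∀ X : Ω → ℝ, Measurable X → (∃ C, ∀ ω, |X ω| ≤ C) →
      Tendsto (fun m => ∫ q, (diffQuotR k (h m) f q - g q) * φ q.1 * X q.2
          ∂((volume.restrict D).prod P)) atTop (𝓝 0)) :
    ∀ φ : EuclideanSpace ℝ (Fin n) → ℝ, IsTest D φ →
      ∀ᵐ ω ∂P, ∫ x in D, f (x, ω) * pder k φ x = -∫ x in D, g (x, ω) * φ x := by
  rintro φ ⟨hφs, hφc, hφD⟩
  have hp1 : 1 ≤ ENNReal.ofReal p := ENNReal.one_le_ofReal.2 hp.le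
  have hφ1 : ContDiff ℝ 1 φ := hφs.of_le (by simp)
  have hh : Tendsto h atTop (𝓝[≠] 0) := tendsto_nhdsWithin_iff.2 ⟨hhlim, .of_forall hh0⟩
  have hpair : ∀ s : Set Ω, MeasurableSet s → ∫ q, (f q * pder k φ q.1 + g q * φ q.1) *
      s.indicator 1 q.2 ∂((volume.restrict D).prod P) = 0 := fun s hs => by
    have hXC : ∃ C, ∀ ω, |s.indicator (1 : Ω → ℝ) ω| ≤ C :=
      ⟨1, fun ω => by by_cases hω : ω ∈ s <;> simp [hω]⟩
    exact integral_fderiv_mul_add_mul_eq_zero hD hp1 hf hg hφ1 hφc hφD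
      (measurable_one.indicator hs) hXC _ hh
      (hconv φ ⟨hφs, hφc, hφD⟩ _ (measurable_one.indicator hs) hXC)
  have hIf : Integrable (fun q => f q * pder k φ q.1) ((volume.restrict D).prod P) := by
    simpa using integrable_mul_of_hasCompactSupport hp1 hf (b := pder k φ) (X := fun _ => (1 : ℝ))
      ((hφ1.continuous_fderiv one_ne_zero).clm_apply continuous_const)
      (hφc.fderiv_apply ℝ _) measurable_const ⟨1, by simp⟩
  have hIg : Integrable (fun q => g q * φ q.1) ((volume.restrict D).prod P) := by
    simpa using integrable_mul_of_hasCompactSupport hp1 hg (X := fun _ => (1 : ℝ))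
      hφs.continuous hφc measurable_const ⟨1, by simp⟩
  filter_upwards [ae_integral_eq_zero_of_forall_integral_mul_indicator_eq_zero (hIf.add hIg) hpair,
    hIf.prod_left_ae, hIg.prod_left_ae] with ω h0 h1 h2
  rw [Pi.add_def, integral_add h1 h2] at h0
  linarith

/-- probabilistic version of the weak-derivative criterion via difference
quotients: if the difference quotients of the random field `f` converge to `g` when tested
against products `φ(x) X(ω)` of test functions and bounded measurable random variables,
then with probability one `g(·,ω)` is the weak derivative of `f(·,ω)` in direction `k`. -/
theorem weak_derivative_of_diff_quotients_random {n : ℕ} {Ω : Type*}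
    [MeasurableSpace Ω] (P : Measure Ω) [IsProbabilityMeasure P] (hPc : P.IsComplete)
    (D : Set (EuclideanSpace ℝ (Fin n))) (hD : IsOpen D)
    (p : ℝ) (hp : 1 < p) (k : Fin n)
    (f g : EuclideanSpace ℝ (Fin n) × Ω → ℝ)
    (hf : MemLp f (ENNReal.ofReal p) ((volume.restrict D).prod P))
    (hg : MemLp g (ENNReal.ofReal p) ((volume.restrict D).prod P))
    (h : ℕ → ℝ) (hh0 : ∀ m, h m ≠ 0) (hhlim : Tendsto h atTop (𝓝 0))
    (hconv : ∀ φ : EuclideanSpace ℝ (Fin n) → ℝ, IsTest D φ →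
      ∀ X : Ω → ℝ, Measurable X → (∃ C, ∀ ω, |X ω| ≤ C) →
      Tendsto (fun m => ∫ q, (diffQuotR k (h m) f q - g q) * φ q.1 * X q.2
          ∂((volume.restrict D).prod P)) atTop (𝓝 0)) :
    ∀ φ : EuclideanSpace ℝ (Fin n) → ℝ, IsTest D φ →
      ∀ᵐ ω ∂P, ∫ x in D, f (x, ω) * pder k φ x = -∫ x in D, g (x, ω) * φ x :=
  weak_derivative_of_diff_quotients_random_general P D hD p hp k f g hf hg h hh0 hhlim hconv
end

section
/- Let D ⊂ ℝⁿ be a nonempty bounded convex open set, T > 0, δ ∈ (0,1], β > 0, and C₁, C₂ ≥ 0. Let u : D × [0,T] → ℝᴺ be measurable with: |u(x,t) − u(y,t)| ≤ C₁ |x−y|^δ for all t ∈ [0,T] and all x, y ∈ D, and ‖u(·,t) − u(·,s)‖_{L²(D)} ≤ C₂ |t−s|^β for all s, t ∈ [0,T]. Then, with η := min(βδ/n, β/2), there exists a constant C₄ depending only on C₁, C₂, n and D such that |u(x,t) − u(x,s)| ≤ C₄ |t−s|^η for all x ∈ D and s, t ∈ [0,T]. Consequently, u is jointly Hölder continuous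 on D × [0,T] with exponent min(δ, η). -/
/-!
Fix `x ∈ D`, times `s, t` with `h = |t - s| > 0`, and put `A = B(x, ρ) ∩ D`. For `y ∈ A` the
spatial bound gives `|u(x,t) - u(x,s)| - 2 C₁ ρ^δ ≤ |u(y,t) - u(y,s)|`; comparing `L²(A)` norms
bounds the left side by `C₂ h^β / |A|^{1/2}`. By convexity `A` contains the
homothetic copy of `D` with centre `x` and ratio `ρ / diam D`, so `|A| ≥ (ρ / diam D)^n |D|`.
The radius `ρ = diam D · (h/T)^{β/n}` turns the two terms into multiples of `(h/T)^{βδ/n}` and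
`(h/T)^{β/2}`. Joint Hölder continuity follows by passing through `u(y,t)`.
-/

open MeasureTheory Set AffineMap Metric Module Real
open scoped ENNReal

theorem le_add_div_sqrt_of_eLpNorm_le {α F : Type*} [MeasurableSpace α] {μ : Measure α}
    [NormedAddCommGroup F] {f : α → F} {A : Set α} (hA : MeasurableSet A) {a c K m : ℝ}
    (hK : 0 ≤ K) (hm : 0 < m) (hmA : ENNReal.ofReal m ≤ μ A) (hpt : ∀ y ∈ A, a ≤ c + ‖f y‖)
    (hf : eLpNorm f 2 (μ.restrict A) ≤ ENNReal.ofReal K) :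
    a ≤ c + K / √m := by
  rcases le_or_gt a c with hac | hca
  · have : 0 ≤ K / √m := by positivity
    linarith
  have hconst : eLpNorm (fun _ ↦ a - c) 2 (μ.restrict A) ≤ eLpNorm f 2 (μ.restrict A) :=
    eLpNorm_mono_ae <| ae_restrict_of_forall_mem hA fun y hy ↦ by
      rw [Real.norm_of_nonneg (sub_nonneg.2 hca.le)]
      linarith [hpt y hy]
  rw [eLpNorm_const' _ two_ne_zero ENNReal.ofNat_ne_top, Measure.restrict_apply_univ,
    ENNReal.toReal_ofNat] at hconst
  have : ENNReal.ofReal ((a - c) * √m) ≤ ENNReal.ofReal K := by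
    rw [ENNReal.ofReal_mul (sub_nonneg.2 hca.le), sqrt_eq_rpow,
      ← ENNReal.ofReal_rpow_of_nonneg hm.le (by norm_num),
      ← Real.enorm_of_nonneg (sub_nonneg.2 hca.le)]
    refine le_trans ?_ (hconst.trans hf)
    gcongr
  rw [ENNReal.ofReal_le_ofReal_iff hK, ← le_div_iff₀ (by positivity)] at this
  linarith

section

variable {E F : Type*} [NormedAddCommGroup E] [NormedSpace ℝ E] {D : Set E}

theorem Convex.image_homothety_subset_closedBall_inter (hD : Convex ℝ D)
    (hDb : Bornology.IsBounded D) {x : E} (hx : x ∈ D) {r : ℝ} (hr : r ∈ Icc 0 1) :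
    homothety x r '' D ⊆ closedBall x (r * diam D) ∩ D := by
  rintro _ ⟨y, hy, rfl⟩
  refine ⟨?_, ?_⟩
  · rw [mem_closedBall, dist_homothety_center, Real.norm_of_nonneg hr.1]
    exact mul_le_mul_of_nonneg_left (dist_le_diam_of_mem hDb hx hy) hr.1
  · rw [homothety_eq_lineMap]
    exact hD.lineMap_mem hx hy hr

variable [FiniteDimensional ℝ E] [MeasurableSpace E] [BorelSpace E] {μ : Measure E}
  [μ.IsAddHaarMeasure] [NormedAddCommGroup F]

theorem Convex.ofReal_pow_mul_measure_le_measure_closedBall_inter (hD : Convex ℝ D)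
    (hDb : Bornology.IsBounded D) {x : E} (hx : x ∈ D) {r : ℝ} (hr : r ∈ Icc 0 1) :
    ENNReal.ofReal (r ^ finrank ℝ E) * μ D ≤ μ (closedBall x (r * diam D) ∩ D) := by
  calc ENNReal.ofReal (r ^ finrank ℝ E) * μ D = μ (homothety x r '' D) := by
        rw [Measure.addHaar_image_homothety, abs_of_nonneg (pow_nonneg hr.1 _)]
    _ ≤ _ := measure_mono (hD.image_homothety_subset_closedBall_inter hDb hx hr)

theorem norm_sub_le_of_holder_of_eLpNorm_le (hD : Convex ℝ D) (hDb : Bornology.IsBounded D)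
    (hDo : IsOpen D) {x : E} (hx : x ∈ D) {g₁ g₂ : E → F} {C δ ε r : ℝ} (hC : 0 ≤ C)
    (hδ : 0 ≤ δ) (hε : 0 ≤ ε) (hr : r ∈ Ioc 0 1)
    (hg₁ : ∀ y ∈ D, ‖g₁ x - g₁ y‖ ≤ C * ‖x - y‖ ^ δ)
    (hg₂ : ∀ y ∈ D, ‖g₂ x - g₂ y‖ ≤ C * ‖x - y‖ ^ δ)
    (hL2 : eLpNorm (fun y ↦ g₁ y - g₂ y) 2 (μ.restrict D) ≤ ENNReal.ofReal ε) :
    ‖g₁ x - g₂ x‖ ≤ 2 * C * (r * diam D) ^ δ + ε / √(r ^ finrank ℝ E * μ.real D) := by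
  have hDfin : μ D ≠ ∞ := hDb.measure_lt_top.ne
  have hDpos : 0 < μ.real D := ENNReal.toReal_pos (hDo.measure_pos μ ⟨x, hx⟩).ne' hDfin
  apply le_add_div_sqrt_of_eLpNorm_le (f := fun y ↦ g₁ y - g₂ y)
    (isClosed_closedBall.measurableSet.inter hDo.measurableSet) hε (mul_pos (pow_pos hr.1 _) hDpos)
  · rw [ENNReal.ofReal_mul (pow_nonneg hr.1.le _), ofReal_measureReal hDfin]
    exact hD.ofReal_pow_mul_measure_le_measure_closedBall_inter hDb hx ⟨hr.1.le, hr.2⟩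
  · rintro y ⟨hyB, hyD⟩
    have hxy : ‖x - y‖ ^ δ ≤ (r * diam D) ^ δ := by
      rw [← dist_eq_norm, dist_comm]
      exact rpow_le_rpow dist_nonneg hyB hδ
    calc ‖g₁ x - g₂ x‖ = ‖(g₁ x - g₁ y) + (g₁ y - g₂ y) - (g₂ x - g₂ y)‖ := by congr 1; abel
      _ ≤ ‖g₁ x - g₁ y‖ + ‖g₁ y - g₂ y‖ + ‖g₂ x - g₂ y‖ :=
        (norm_sub_le _ _).trans (by gcongr; exact norm_add_le _ _)
      _ ≤ _ := by nlinarith [hg₁ y hyD, hg₂ y hyD, mul_le_mul_of_nonneg_left hxy hC]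
  · exact (eLpNorm_mono_measure _ (Measure.restrict_mono inter_subset_right le_rfl)).trans hL2

theorem norm_sub_le_mul_div_rpow_of_holder_of_eLpNorm_le (hD : Convex ℝ D)
    (hDb : Bornology.IsBounded D) (hDo : IsOpen D) (hd : 0 < finrank ℝ E) {x : E} (hx : x ∈ D)
    {g₁ g₂ : E → F} {C₁ C₂ δ β h T : ℝ} (hC₁ : 0 ≤ C₁) (hC₂ : 0 ≤ C₂) (hδ : 0 ≤ δ)
    (hβ : 0 ≤ β) (hh : 0 < h) (hhT : h ≤ T)
    (hg₁ : ∀ y ∈ D, ‖g₁ x - g₁ y‖ ≤ C₁ * ‖x - y‖ ^ δ)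
    (hg₂ : ∀ y ∈ D, ‖g₂ x - g₂ y‖ ≤ C₁ * ‖x - y‖ ^ δ)
    (hL2 : eLpNorm (fun y ↦ g₁ y - g₂ y) 2 (μ.restrict D) ≤ ENNReal.ofReal (C₂ * h ^ β)) :
    ‖g₁ x - g₂ x‖ ≤ (2 * C₁ * diam D ^ δ + C₂ * T ^ β / √(μ.real D)) *
      (h / T) ^ min (β * δ / finrank ℝ E) (β / 2) := by
  set d := finrank ℝ E
  set σ := h / T
  have hT : 0 < T := hh.trans_le hhT
  have hσ : σ ∈ Ioc 0 1 := ⟨div_pos hh hT, (div_le_one hT).2 hhT⟩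
  have hr : σ ^ (β / d) ∈ Ioc 0 1 :=
    ⟨rpow_pos_of_pos hσ.1 _, rpow_le_one hσ.1.le hσ.2 (by positivity)⟩
  have hspatial_term : (σ ^ (β / d) * diam D) ^ δ = diam D ^ δ * σ ^ (β * δ / d) := by
    rw [mul_rpow hr.1.le diam_nonneg, ← rpow_mul hσ.1.le, mul_comm, div_mul_eq_mul_div]
  have hvol : √((σ ^ (β / d)) ^ d * μ.real D) = σ ^ (β / 2) * √(μ.real D) := by
    rw [← rpow_natCast, ← rpow_mul hσ.1.le, div_mul_cancel₀ _ (by positivity),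
      sqrt_mul (rpow_nonneg hσ.1.le _), sqrt_eq_rpow, ← rpow_mul hσ.1.le, mul_one_div]
  have hL2_term : C₂ * h ^ β / (σ ^ (β / 2) * √(μ.real D))
      = C₂ * T ^ β / √(μ.real D) * σ ^ (β / 2) := by
    have hh' : h ^ β = T ^ β * (σ ^ (β / 2) * σ ^ (β / 2)) := by
      rw [← rpow_add hσ.1, add_halves, ← mul_rpow hT.le hσ.1.le, mul_div_cancel₀ _ hT.ne']
    calc C₂ * h ^ β / (σ ^ (β / 2) * √(μ.real D))
        = σ ^ (β / 2) * (C₂ * T ^ β * σ ^ (β / 2)) / (σ ^ (β / 2) * √(μ.real D)) := by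
          rw [hh']; ring
      _ = _ := by rw [mul_div_mul_left _ _ (rpow_pos_of_pos hσ.1 _).ne']; ring
  calc ‖g₁ x - g₂ x‖
      ≤ 2 * C₁ * (σ ^ (β / d) * diam D) ^ δ + C₂ * h ^ β / √((σ ^ (β / d)) ^ d * μ.real D) :=
        norm_sub_le_of_holder_of_eLpNorm_le hD hDb hDo hx hC₁ hδ (by positivity) hr hg₁ hg₂ hL2
    _ = 2 * C₁ * diam D ^ δ * σ ^ (β * δ / d) + C₂ * T ^ β / √(μ.real D) * σ ^ (β / 2) := by
        rw [hspatial_term, hvol, hL2_term]; ring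
    _ ≤ _ := by
        rw [add_mul]
        exact add_le_add
          (mul_le_mul_of_nonneg_left
            (rpow_le_rpow_of_exponent_ge hσ.1 hσ.2 (min_le_left _ _)) (by positivity))
          (mul_le_mul_of_nonneg_left
            (rpow_le_rpow_of_exponent_ge hσ.1 hσ.2 (min_le_right _ _)) (by positivity))

theorem exists_norm_sub_le_rpow_of_holder_of_eLpNorm_le (hD : Convex ℝ D)
    (hDb : Bornology.IsBounded D) (hDo : IsOpen D) (hd : 0 < finrank ℝ E)
    {C₁ C₂ δ β T : ℝ} (hC₁ : 0 ≤ C₁) (hC₂ : 0 ≤ C₂) (hδ : 0 ≤ δ) (hβ : 0 ≤ β) (hT : 0 < T)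
    {u : E → ℝ → F}
    (hspace : ∀ t ∈ Icc 0 T, ∀ x ∈ D, ∀ y ∈ D, ‖u x t - u y t‖ ≤ C₁ * ‖x - y‖ ^ δ)
    (htime : ∀ s ∈ Icc 0 T, ∀ t ∈ Icc 0 T,
      eLpNorm (fun x ↦ u x t - u x s) 2 (μ.restrict D) ≤ ENNReal.ofReal (C₂ * |t - s| ^ β)) :
    ∃ C₄, 0 ≤ C₄ ∧ ∀ x ∈ D, ∀ s ∈ Icc 0 T, ∀ t ∈ Icc 0 T,
      ‖u x t - u x s‖ ≤ C₄ * |t - s| ^ min (β * δ / finrank ℝ E) (β / 2) := by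
  set η := min (β * δ / finrank ℝ E) (β / 2)
  refine ⟨(2 * C₁ * diam D ^ δ + C₂ * T ^ β / √(μ.real D)) / T ^ η, by positivity, ?_⟩
  intro x hx s hs t ht
  rcases eq_or_ne t s with rfl | hts
  · rw [sub_self, norm_zero]
    positivity
  have hts_le : |t - s| ≤ T :=
    abs_sub_le_iff.2 ⟨by linarith [ht.2, hs.1], by linarith [hs.2, ht.1]⟩
  have hbound := norm_sub_le_mul_div_rpow_of_holder_of_eLpNorm_le hD hDb hDo hd hx hC₁ hC₂ hδ hβ
    (abs_pos.2 (sub_ne_zero.2 hts)) hts_le (hspace t ht x hx) (hspace s hs x hx)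
    (htime s hs t ht)
  rwa [div_rpow (abs_nonneg _) hT.le, mul_div_assoc', mul_div_right_comm] at hbound

end

theorem rpow_le_rpow_mul_rpow_sub {b B p q : ℝ} (hb : 0 ≤ b) (hbB : b ≤ B) (hq : 0 ≤ q)
    (hqp : q ≤ p) : b ^ p ≤ b ^ q * B ^ (p - q) := by
  rcases eq_or_ne p 0 with rfl | hp
  · obtain rfl : q = 0 := le_antisymm hqp hq
    simp
  calc b ^ p = b ^ (q + (p - q)) := by rw [add_sub_cancel]
    _ = b ^ q * b ^ (p - q) := rpow_add' hb (by rwa [add_sub_cancel])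
    _ ≤ b ^ q * B ^ (p - q) := by gcongr

theorem exists_norm_sub_le_rpow_add_of_holder {E F : Type*} [SeminormedAddCommGroup E]
    [SeminormedAddCommGroup F] {D : Set E} {S : Set ℝ} (hD : Bornology.IsBounded D)
    (hS : Bornology.IsBounded S) {C₁ C₄ δ η : ℝ} (hC₁ : 0 ≤ C₁) (hC₄ : 0 ≤ C₄) (hδ : 0 ≤ δ)
    (hη : 0 ≤ η) {u : E → ℝ → F}
    (hspace : ∀ t ∈ S, ∀ x ∈ D, ∀ y ∈ D, ‖u x t - u y t‖ ≤ C₁ * ‖x - y‖ ^ δ)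
    (htime : ∀ x ∈ D, ∀ s ∈ S, ∀ t ∈ S, ‖u x t - u x s‖ ≤ C₄ * |t - s| ^ η) :
    ∃ C₅, ∀ x ∈ D, ∀ y ∈ D, ∀ s ∈ S, ∀ t ∈ S,
      ‖u x t - u y s‖ ≤ C₅ * (‖x - y‖ + |t - s|) ^ min δ η := by
  set B := diam D + diam S
  set κ := min δ η
  have hκ : 0 ≤ κ := le_min hδ hη
  refine ⟨C₁ * B ^ (δ - κ) + C₄ * B ^ (η - κ), fun x hx y hy s hs t ht ↦ ?_⟩
  set w := ‖x - y‖ + |t - s|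
  have hwB : w ≤ B := by
    simp only [w, B, ← dist_eq_norm, ← Real.dist_eq]
    exact add_le_add (dist_le_diam_of_mem hD hx hy) (dist_le_diam_of_mem hS ht hs)
  have hxy : ‖x - y‖ ^ δ ≤ w ^ κ * B ^ (δ - κ) :=
    (rpow_le_rpow (norm_nonneg _) (le_add_of_nonneg_right (abs_nonneg _)) hδ).trans
      (rpow_le_rpow_mul_rpow_sub (by positivity) hwB hκ (min_le_left _ _))
  have hts : |t - s| ^ η ≤ w ^ κ * B ^ (η - κ) :=
    (rpow_le_rpow (abs_nonneg _) (le_add_of_nonneg_left (norm_nonneg _)) hη).trans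
      (rpow_le_rpow_mul_rpow_sub (by positivity) hwB hκ (min_le_right _ _))
  calc ‖u x t - u y s‖ ≤ ‖u x t - u y t‖ + ‖u y t - u y s‖ :=
        norm_sub_le_norm_sub_add_norm_sub _ _ _
    _ ≤ C₁ * ‖x - y‖ ^ δ + C₄ * |t - s| ^ η :=
        add_le_add (hspace t ht x hx y hy) (htime y hy s hs t ht)
    _ ≤ C₁ * (w ^ κ * B ^ (δ - κ)) + C₄ * (w ^ κ * B ^ (η - κ)) := by gcongr
    _ = (C₁ * B ^ (δ - κ) + C₄ * B ^ (η - κ)) * w ^ κ := by ring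

theorem joint_Hoelder_of_space_Hoelder_and_time_L2_Hoelder_general {n N : ℕ} (hn : 0 < n)
    (D : Set (EuclideanSpace ℝ (Fin n)))
    (hDbd : Bornology.IsBounded D) (hDconv : Convex ℝ D) (hDopen : IsOpen D)
    (T : ℝ) (hT : 0 < T) (δ : ℝ) (hδ : δ ∈ Set.Ioc (0 : ℝ) 1) (β : ℝ) (hβ : 0 < β)
    (C₁ C₂ : ℝ) (hC₁ : 0 ≤ C₁) (hC₂ : 0 ≤ C₂)
    (u : EuclideanSpace ℝ (Fin n) → ℝ → EuclideanSpace ℝ (Fin N))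
    (hspace : ∀ t ∈ Set.Icc (0 : ℝ) T, ∀ x ∈ D, ∀ y ∈ D,
      ‖u x t - u y t‖ ≤ C₁ * ‖x - y‖ ^ δ)
    (htime : ∀ s ∈ Set.Icc (0 : ℝ) T, ∀ t ∈ Set.Icc (0 : ℝ) T,
      eLpNorm (fun x => u x t - u x s) 2 (volume.restrict D)
        ≤ ENNReal.ofReal (C₂ * |t - s| ^ β)) :
    ∃ C₄ : ℝ,
      (∀ x ∈ D, ∀ s ∈ Set.Icc (0 : ℝ) T, ∀ t ∈ Set.Icc (0 : ℝ) T,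
        ‖u x t - u x s‖ ≤ C₄ * |t - s| ^ (min (β * δ / n) (β / 2))) ∧
      ∃ C₅ : ℝ, ∀ x ∈ D, ∀ y ∈ D, ∀ s ∈ Set.Icc (0 : ℝ) T, ∀ t ∈ Set.Icc (0 : ℝ) T,
        ‖u x t - u y s‖
          ≤ C₅ * (‖x - y‖ + |t - s|) ^ (min δ (min (β * δ / n) (β / 2))) := by
  have hδ₀ : 0 ≤ δ := hδ.1.le
  obtain ⟨C₄, hC₄, htemporal⟩ := exists_norm_sub_le_rpow_of_holder_of_eLpNorm_le hDconv hDbd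
    hDopen (by rwa [finrank_euclideanSpace_fin]) hC₁ hC₂ hδ₀ hβ.le hT hspace htime
  rw [finrank_euclideanSpace_fin] at htemporal
  exact ⟨C₄, htemporal, exists_norm_sub_le_rpow_add_of_holder hDbd (isBounded_Icc 0 T) hC₁ hC₄ hδ₀
    (by positivity) hspace htemporal⟩

/-- uniform spatial Hölder continuity together with Hölder continuity in time
with values in `L²(D)` imply joint space-time Hölder continuity, with temporal exponent
`η = min(βδ/n, β/2)` and joint exponent `min(δ, η)`. -/
theorem joint_Hoelder_of_space_Hoelder_and_time_L2_Hoelder {n N : ℕ} (hn : 0 < n)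
    (D : Set (EuclideanSpace ℝ (Fin n))) (hDne : D.Nonempty)
    (hDbd : Bornology.IsBounded D) (hDconv : Convex ℝ D) (hDopen : IsOpen D)
    (T : ℝ) (hT : 0 < T) (δ : ℝ) (hδ : δ ∈ Set.Ioc (0 : ℝ) 1) (β : ℝ) (hβ : 0 < β)
    (C₁ C₂ : ℝ) (hC₁ : 0 ≤ C₁) (hC₂ : 0 ≤ C₂)
    (u : EuclideanSpace ℝ (Fin n) → ℝ → EuclideanSpace ℝ (Fin N))
    (humeas : Measurable (fun q : EuclideanSpace ℝ (Fin n) × ℝ => u q.1 q.2))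
    (hspace : ∀ t ∈ Set.Icc (0 : ℝ) T, ∀ x ∈ D, ∀ y ∈ D,
      ‖u x t - u y t‖ ≤ C₁ * ‖x - y‖ ^ δ)
    (htime : ∀ s ∈ Set.Icc (0 : ℝ) T, ∀ t ∈ Set.Icc (0 : ℝ) T,
      eLpNorm (fun x => u x t - u x s) 2 (volume.restrict D)
        ≤ ENNReal.ofReal (C₂ * |t - s| ^ β)) :
    ∃ C₄ : ℝ,
      (∀ x ∈ D, ∀ s ∈ Set.Icc (0 : ℝ) T, ∀ t ∈ Set.Icc (0 : ℝ) T,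
        ‖u x t - u x s‖ ≤ C₄ * |t - s| ^ (min (β * δ / n) (β / 2))) ∧
      ∃ C₅ : ℝ, ∀ x ∈ D, ∀ y ∈ D, ∀ s ∈ Set.Icc (0 : ℝ) T, ∀ t ∈ Set.Icc (0 : ℝ) T,
        ‖u x t - u y s‖
          ≤ C₅ * (‖x - y‖ + |t - s|) ^ (min δ (min (β * δ / n) (β / 2))) :=
  joint_Hoelder_of_space_Hoelder_and_time_L2_Hoelder_general hn D hDbd hDconv hDopen T hT δ hδ β hβ
    C₁ C₂ hC₁ hC₂ u hspace htime
end

section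
/- Let n, N ≥ 1, s ∈ (−1, ∞), and set μ(s) := 1 − (s/(2+s))². Let u : ℝⁿ → ℝᴺ be differentiable at a point x with u(x) ≠ 0, and set v := u |u|^s (so v is differentiable at x). Then, with ⟨Du, Dv⟩ := Σ_{i=1}^n Σ_{α=1}^N ∂_i u^α(x) ∂_i v^α(x) the Frobenius inner product of the Jacobians and |·| the Frobenius norm, one has ⟨Du(x), Dv(x)⟩ ≥ μ(s)^{1/2} |Du(x)| |Dv(x)|. -/
/-- The Frobenius inner product of the Jacobians (as `n × N` matrices) of two linear maps
between Euclidean spaces. -/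
noncomputable def frob {n N : ℕ}
    (L M : EuclideanSpace ℝ (Fin n) →L[ℝ] EuclideanSpace ℝ (Fin N)) : ℝ :=
  ∑ i : Fin n, ∑ α : Fin N,
    L (EuclideanSpace.single i 1) α * M (EuclideanSpace.single i 1) α

/-- The Frobenius norm of a linear map between Euclidean spaces. -/
noncomputable def frobNorm {n N : ℕ}
    (L : EuclideanSpace ℝ (Fin n) →L[ℝ] EuclideanSpace ℝ (Fin N)) : ℝ :=
  Real.sqrt (frob L L)

/-!
Put `w = u x` and `A = Du(x)`. Differentiating `‖u‖ ^ s • u` gives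
`Dv(x) = ‖w‖ ^ s • T A`, where `T = id + s P` and `P` is the orthogonal projection onto `ℝ w`:
`T` stretches the line `ℝ w` by `t = 1 + s > 0` and fixes its orthogonal complement.
Splitting the columns of `A` along `ℝ w` and `w⊥`, with squared Frobenius norms `a` and `b`,
the claim becomes `2 √t / (1 + t) · √(a + b) · √(t² a + b) ≤ t a + b`, the two-eigenvalue case
of Kantorovich's inequality; note `μ(s) = 4 t / (1 + t)²`.
-/

open RealInnerProductSpace

/-- The defect of the squared inequality is `(t - 1)² (t a - b)²`. -/
theorem kantorovich_two_values {t a b : ℝ} (ht : 0 ≤ t) (ha : 0 ≤ a) (hb : 0 ≤ b) :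
    2 * √t / (1 + t) * (√(a + b) * √(t ^ 2 * a + b)) ≤ t * a + b := by
  have hlhs : 0 ≤ 2 * √t / (1 + t) * (√(a + b) * √(t ^ 2 * a + b)) := by positivity
  refine (pow_le_pow_iff_left₀ hlhs (by positivity) two_ne_zero).mp ?_
  rw [mul_pow, mul_pow, div_pow, mul_pow, Real.sq_sqrt ht, Real.sq_sqrt (by positivity),
    Real.sq_sqrt (by positivity), div_mul_eq_mul_div, div_le_iff₀ (by positivity)]
  nlinarith [sq_nonneg ((t - 1) * (t * a - b))]

theorem sqrt_one_sub_sq_div_two_add {s : ℝ} (hs : -1 < s) :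
    √(1 - (s / (2 + s)) ^ 2) = 2 * √(1 + s) / (2 + s) := by
  have h2s : 0 < 2 + s := by linarith
  have hsq : 1 - (s / (2 + s)) ^ 2 = (2 * √(1 + s) / (2 + s)) ^ 2 := by
    rw [div_pow, div_pow, mul_pow, Real.sq_sqrt (by linarith)]
    field_simp
    ring
  rw [hsq, Real.sqrt_sq (by positivity)]

section Calculus

variable {E F : Type*} [NormedAddCommGroup E] [NormedSpace ℝ E]
  [NormedAddCommGroup F] [InnerProductSpace ℝ F]

theorem HasFDerivAt.norm_rpow_smul {u : E → F} {A : E →L[ℝ] F} {x : E}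
    (hu : HasFDerivAt u A x) (hux : u x ≠ 0) (s : ℝ) :
    HasFDerivAt (fun y => ‖u y‖ ^ s • u y)
      (‖u x‖ ^ s • (A + s • (ℝ ∙ u x).starProjection.comp A)) x := by
  have hw : 0 < ‖u x‖ := norm_pos_iff.mpr hux
  have hpow : ∀ y, (‖u y‖ ^ 2) ^ (s / 2) = ‖u y‖ ^ s := fun y => by
    rw [← Real.rpow_natCast, ← Real.rpow_mul (norm_nonneg _)]
    ring_nf
  have hD := (hu.norm_sq.rpow_const (p := s / 2) (Or.inl (by positivity))).smul hu
  simp only [hpow] at hD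
  refine hD.congr_fderiv ?_
  ext1 e
  have hexp : (‖u x‖ ^ 2) ^ (s / 2 - 1) = ‖u x‖ ^ s / ‖u x‖ ^ 2 := by
    rw [Real.rpow_sub (by positivity), Real.rpow_one, hpow]
  simp only [add_apply, smul_apply, ContinuousLinearMap.comp_apply,
    ContinuousLinearMap.smulRight_apply, Submodule.starProjection_singleton,
    innerSL_apply_apply, hexp, smul_smul, smul_add]
  congr 2
  simp only [smul_eq_mul, RCLike.ofReal_real_eq_id, id]
  ring

end Calculus

namespace Submodule

variable {F : Type*} [NormedAddCommGroup F] [InnerProductSpace ℝ F]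
  (K : Submodule ℝ F) [K.HasOrthogonalProjection]

theorem add_smul_starProjection_eq (s : ℝ) (y : F) :
    y + s • K.starProjection y = (1 + s) • K.starProjection y + Kᗮ.starProjection y := by
  rw [add_smul, one_smul, add_right_comm, starProjection_add_starProjection_orthogonal]

theorem inner_starProjection_starProjection_orthogonal (y : F) :
    ⟪K.starProjection y, Kᗮ.starProjection y⟫ = 0 :=
  inner_right_of_mem_orthogonal (K.starProjection_apply_mem y) (Kᗮ.starProjection_apply_mem y)

theorem inner_add_smul_starProjection (s : ℝ) (y : F) :
    ⟪y, y + s • K.starProjection y⟫ =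
      (1 + s) * ‖K.starProjection y‖ ^ 2 + ‖Kᗮ.starProjection y‖ ^ 2 := by
  rw [add_smul_starProjection_eq]
  nth_rewrite 1 [← K.starProjection_add_starProjection_orthogonal y]
  simp only [inner_add_left, inner_add_right, inner_smul_right, real_inner_self_eq_norm_sq,
    inner_starProjection_starProjection_orthogonal, real_inner_comm (K.starProjection y)]
  ring

theorem norm_add_smul_starProjection_sq (s : ℝ) (y : F) :
    ‖y + s • K.starProjection y‖ ^ 2 =
      (1 + s) ^ 2 * ‖K.starProjection y‖ ^ 2 + ‖Kᗮ.starProjection y‖ ^ 2 := by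
  rw [add_smul_starProjection_eq, ← real_inner_self_eq_norm_sq]
  simp only [inner_add_left, inner_add_right, inner_smul_right, inner_smul_left,
    real_inner_self_eq_norm_sq, inner_starProjection_starProjection_orthogonal,
    real_inner_comm (K.starProjection y), RCLike.conj_to_real]
  ring

end Submodule

section Frobenius

variable {n N : ℕ}

theorem frob_eq_sum_inner (L M : EuclideanSpace ℝ (Fin n) →L[ℝ] EuclideanSpace ℝ (Fin N)) :
    frob L M = ∑ i, ⟪L (EuclideanSpace.single i 1), M (EuclideanSpace.single i 1)⟫ := by
  simp only [frob, PiLp.inner_apply, RCLike.inner_apply, conj_trivial, mul_comm]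

theorem frobNorm_eq_sqrt_sum_norm_sq
    (L : EuclideanSpace ℝ (Fin n) →L[ℝ] EuclideanSpace ℝ (Fin N)) :
    frobNorm L = √(∑ i, ‖L (EuclideanSpace.single i 1)‖ ^ 2) := by
  simp only [frobNorm, frob_eq_sum_inner, real_inner_self_eq_norm_sq]

theorem frob_smul_right (c : ℝ) (L M : EuclideanSpace ℝ (Fin n) →L[ℝ] EuclideanSpace ℝ (Fin N)) :
    frob L (c • M) = c * frob L M := by
  simp only [frob_eq_sum_inner, smul_apply, inner_smul_right, Finset.mul_sum]

theorem frobNorm_smul (c : ℝ) (L : EuclideanSpace ℝ (Fin n) →L[ℝ] EuclideanSpace ℝ (Fin N)) :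
    frobNorm (c • L) = |c| * frobNorm L := by
  simp only [frobNorm_eq_sqrt_sum_norm_sq, smul_apply, norm_smul, mul_pow, ← Finset.mul_sum,
    Real.norm_eq_abs, sq_abs]
  rw [Real.sqrt_mul (sq_nonneg c), Real.sqrt_sq_eq_abs]

theorem le_frob_add_smul_starProjection_comp (K : Submodule ℝ (EuclideanSpace ℝ (Fin N)))
    [K.HasOrthogonalProjection] (L : EuclideanSpace ℝ (Fin n) →L[ℝ] EuclideanSpace ℝ (Fin N))
    {s : ℝ} (hs : -1 < s) :
    2 * √(1 + s) / (2 + s) * (frobNorm L * frobNorm (L + s • K.starProjection.comp L)) ≤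
      frob L (L + s • K.starProjection.comp L) := by
  set a := ∑ i, ‖K.starProjection (L (EuclideanSpace.single i 1))‖ ^ 2
  set b := ∑ i, ‖Kᗮ.starProjection (L (EuclideanSpace.single i 1))‖ ^ 2
  have hL : frobNorm L = √(a + b) := by
    simp only [frobNorm_eq_sqrt_sum_norm_sq, a, b, ← Finset.sum_add_distrib,
      ← K.norm_sq_eq_add_norm_sq_starProjection]
  have hM : frobNorm (L + s • K.starProjection.comp L) = √((1 + s) ^ 2 * a + b) := by
    simp only [frobNorm_eq_sqrt_sum_norm_sq, add_apply, smul_apply,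
      ContinuousLinearMap.comp_apply, K.norm_add_smul_starProjection_sq, a, b,
      Finset.sum_add_distrib, Finset.mul_sum]
  have hLM : frob L (L + s • K.starProjection.comp L) = (1 + s) * a + b := by
    simp only [frob_eq_sum_inner, add_apply, smul_apply, ContinuousLinearMap.comp_apply,
      K.inner_add_smul_starProjection, a, b, Finset.sum_add_distrib, Finset.mul_sum]
  rw [hL, hM, hLM, show 2 + s = 1 + (1 + s) by ring]
  exact kantorovich_two_values (by linarith) (Finset.sum_nonneg fun i _ => sq_nonneg _)
    (Finset.sum_nonneg fun i _ => sq_nonneg _)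

end Frobenius

theorem kalita_inner_product_inequality_general {n N : ℕ}
    (s : ℝ) (hs : -1 < s)
    (u : EuclideanSpace ℝ (Fin n) → EuclideanSpace ℝ (Fin N))
    (x : EuclideanSpace ℝ (Fin n))
    (hu : DifferentiableAt ℝ u x) (hux : u x ≠ 0)
    (v : EuclideanSpace ℝ (Fin n) → EuclideanSpace ℝ (Fin N))
    (hv : v = fun y => ‖u y‖ ^ s • u y) :
    DifferentiableAt ℝ v x ∧
    Real.sqrt (1 - (s / (2 + s)) ^ 2) * (frobNorm (fderiv ℝ u x) * frobNorm (fderiv ℝ v x))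
      ≤ frob (fderiv ℝ u x) (fderiv ℝ v x) := by
  subst hv
  have hDv := hu.hasFDerivAt.norm_rpow_smul hux s
  refine ⟨hDv.differentiableAt, ?_⟩
  set A := fderiv ℝ u x
  set M := A + s • (ℝ ∙ u x).starProjection.comp A
  have hc : 0 ≤ ‖u x‖ ^ s := by positivity
  rw [hDv.fderiv, frob_smul_right, frobNorm_smul, abs_of_nonneg hc,
    sqrt_one_sub_sq_div_two_add hs]
  calc 2 * √(1 + s) / (2 + s) * (frobNorm A * (‖u x‖ ^ s * frobNorm M))
      = ‖u x‖ ^ s * (2 * √(1 + s) / (2 + s) * (frobNorm A * frobNorm M)) := by ring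
    _ ≤ ‖u x‖ ^ s * frob A M :=
      mul_le_mul_of_nonneg_left (le_frob_add_smul_starProjection_comp _ A hs) hc

/-- Kalita's algebraic lemma: for `v = u |u|^s` one has
`⟨Du, Dv⟩ ≥ μ(s)^{1/2} |Du| |Dv|` with `μ(s) = 1 - (s/(2+s))²`, at any point of
differentiability of `u` where `u ≠ 0`. -/
theorem kalita_inner_product_inequality {n N : ℕ} (hn : 1 ≤ n) (hN : 1 ≤ N)
    (s : ℝ) (hs : -1 < s)
    (u : EuclideanSpace ℝ (Fin n) → EuclideanSpace ℝ (Fin N))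
    (x : EuclideanSpace ℝ (Fin n))
    (hu : DifferentiableAt ℝ u x) (hux : u x ≠ 0)
    (v : EuclideanSpace ℝ (Fin n) → EuclideanSpace ℝ (Fin N))
    (hv : v = fun y => ‖u y‖ ^ s • u y) :
    DifferentiableAt ℝ v x ∧
    Real.sqrt (1 - (s / (2 + s)) ^ 2) * (frobNorm (fderiv ℝ u x) * frobNorm (fderiv ℝ v x))
      ≤ frob (fderiv ℝ u x) (fderiv ℝ v x) :=
  kalita_inner_product_inequality_general s hs u x hu hux v hv
end

section
/- For every K > 0 and every q ≥ 1 there exist a function T : [0,∞) → [0,∞) of class C² and a constant c depending only on q such that: (i) T is strictly increasing and convex on [0,∞), and T(t) = t^{2q} for all t ∈ [0,K]; (ii) T(t) + T′(t)·t + T″(t)·t² ≤ c · min{K^{2q−2} t², t^{2q}} for all t ≥ 0; moreover 0 ≤ T″(t)·t − T′(t) ≤ 2(q−1) T′(t) for all t ≥ 0, and T″(t)·t² ≤ c T′(t)·t ≤ c T(t) for all t ≥ 0. -/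
/-!
With `p = 2q ≥ 2`, continue `t ^ p` beyond `K` by its second-order Taylor polynomial at `K`.
For `t ≥ 0` write `m = min t K`, `s = t - m` and `a = m ^ (p - 2)`; then
`T = a (m² + p m s + p(p-1)/2 s²)`, `T' = p a (m + (p-1) s)`, `T'' = p(p-1) a` and
`min (K^(p-2) t², t^p) = a t²`, so every estimate is a polynomial inequality in `m, s ≥ 0`.
They chain as `T ≤ T' t ≤ T'' t² = p(p-1) min (K^(p-2) t², t^p)`, which gives `c = 3p(p-1)`.
-/

open Set

/-- First derivative of a function on `[0,∞)`. -/
noncomputable def d1 (T : ℝ → ℝ) : ℝ → ℝ := derivWithin T (Set.Ici 0)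

/-- Second derivative of a function on `[0,∞)`. -/
noncomputable def d2 (T : ℝ → ℝ) : ℝ → ℝ := derivWithin (d1 T) (Set.Ici 0)

theorem hasDerivAt_ite_le {f g f' g' : ℝ → ℝ} {a : ℝ}
    (hf : ∀ x ≤ a, HasDerivAt f (f' x) x) (hg : ∀ x ≥ a, HasDerivAt g (g' x) x)
    (hfg : f a = g a) (hfg' : f' a = g' a) (x : ℝ) :
    HasDerivAt (fun x => if x ≤ a then f x else g x) (if x ≤ a then f' x else g' x) x := by
  rcases lt_trichotomy x a with hx | rfl | hx
  · rw [if_pos hx.le]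
    refine (hf x hx.le).congr_of_eventuallyEq ?_
    filter_upwards [Iio_mem_nhds hx] with y hy
    rw [if_pos (le_of_lt hy)]
  · rw [if_pos le_rfl]
    have left : HasDerivWithinAt (fun y => if y ≤ x then f y else g y) (f' x) (Iic x) x :=
      (hf x le_rfl).hasDerivWithinAt.congr (fun y hy => if_pos hy) (if_pos le_rfl)
    have right : HasDerivWithinAt (fun y => if y ≤ x then f y else g y) (f' x) (Ici x) x := by
      refine hfg' ▸ (hg x le_rfl).hasDerivWithinAt.congr (fun y hy => ?_) (by simp [hfg])
      rcases (mem_Ici.1 hy).eq_or_lt with rfl | hlt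
      · simp [hfg]
      · exact if_neg (not_le.2 hlt)
    simpa using left.union right
  · rw [if_neg (not_le.2 hx)]
    refine (hg x hx.le).congr_of_eventuallyEq ?_
    filter_upwards [Ioi_mem_nhds hx] with y hy
    rw [if_neg (not_le.2 hy)]

theorem d1_eq_of_hasDerivAt {f : ℝ → ℝ} {y x : ℝ} (h : HasDerivAt f y x) (hx : 0 ≤ x) :
    d1 f x = y :=
  h.hasDerivWithinAt.derivWithin (uniqueDiffOn_Ici 0 x hx)

theorem d2_eq_of_hasDerivAt {f f' : ℝ → ℝ} {y x : ℝ} (hf : ∀ x ≥ 0, HasDerivAt f (f' x) x)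
    (h : HasDerivAt f' y x) (hx : 0 ≤ x) : d2 f x = y :=
  (h.hasDerivWithinAt.congr (fun z hz => d1_eq_of_hasDerivAt (hf z hz) hz)
    (d1_eq_of_hasDerivAt (hf x hx) hx)).derivWithin (uniqueDiffOn_Ici 0 x hx)

theorem contDiff_two_of_hasDerivAt {f f' f'' : ℝ → ℝ} (hf : ∀ x, HasDerivAt f (f' x) x)
    (hf' : ∀ x, HasDerivAt f' (f'' x) x) (hf'' : Continuous f'') : ContDiff ℝ 2 f := by
  have hderiv : deriv f = f' := funext fun x => (hf x).deriv
  have hderiv' : deriv f' = f'' := funext fun x => (hf' x).deriv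
  rw [show (2 : WithTop ℕ∞) = 1 + 1 from rfl, contDiff_succ_iff_deriv, hderiv]
  refine ⟨fun x => (hf x).differentiableAt, by simp, ?_⟩
  rw [show (1 : WithTop ℕ∞) = 0 + 1 from rfl, contDiff_succ_iff_deriv, hderiv']
  exact ⟨fun x => (hf' x).differentiableAt, by simp, contDiff_zero.2 hf''⟩

noncomputable section

def truncPow (K p t : ℝ) : ℝ :=
  if t ≤ K then t ^ p else K ^ (p - 2) * (K ^ 2 + p * K * (t - K) + p * (p - 1) / 2 * (t - K) ^ 2)

def truncPowDeriv (K p t : ℝ) : ℝ :=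
  if t ≤ K then p * t ^ (p - 1) else p * K ^ (p - 2) * (K + (p - 1) * (t - K))

def truncPowDeriv2 (K p t : ℝ) : ℝ :=
  if t ≤ K then p * (p - 1) * t ^ (p - 2) else p * (p - 1) * K ^ (p - 2)

end

section

variable {K p t : ℝ}

theorem rpow_sub_two_mul_sq {x : ℝ} (hx : 0 ≤ x) (hp : p ≠ 0) : x ^ (p - 2) * x ^ 2 = x ^ p := by
  simpa using (Real.rpow_add_natCast' hx (y := p - 2) (n := 2) (by simpa using hp)).symm

theorem rpow_sub_two_mul_self {x : ℝ} (hx : 0 ≤ x) (hp : p ≠ 1) :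
    x ^ (p - 2) * x = x ^ (p - 1) := by
  rw [← Real.rpow_add_one' hx (by contrapose! hp; linarith)]
  ring_nf

theorem truncPow_of_le (h : t ≤ K) : truncPow K p t = t ^ p := if_pos h

theorem hasDerivAt_truncPow (hp : 1 ≤ p) (hK : 0 < K) (t : ℝ) :
    HasDerivAt (truncPow K p) (truncPowDeriv K p t) t := by
  have taylor (x : ℝ) : HasDerivAt
      (fun x => K ^ (p - 2) * (K ^ 2 + p * K * (x - K) + p * (p - 1) / 2 * (x - K) ^ 2))
      (p * K ^ (p - 2) * (K + (p - 1) * (x - K))) x := by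
    have hx := (hasDerivAt_id' x).sub_const K
    refine ((((hx.const_mul (p * K)).const_add (K ^ 2)).add
      ((hx.fun_pow 2).const_mul (p * (p - 1) / 2))).const_mul (K ^ (p - 2))).congr_deriv ?_
    push_cast
    ring
  exact hasDerivAt_ite_le (a := K) (fun x _ => Real.hasDerivAt_rpow_const (.inr hp))
    (fun x _ => taylor x)
    (by simp [rpow_sub_two_mul_sq hK.le (by linarith : p ≠ 0)])
    (by rw [sub_self, mul_zero, add_zero, mul_assoc, ← Real.rpow_add_one hK.ne']; ring_nf) t

theorem hasDerivAt_truncPowDeriv (hp : 2 ≤ p) (hK : 0 < K) (t : ℝ) :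
    HasDerivAt (truncPowDeriv K p) (truncPowDeriv2 K p t) t := by
  have power (x : ℝ) : HasDerivAt (fun x => p * x ^ (p - 1)) (p * (p - 1) * x ^ (p - 2)) x := by
    refine ((Real.hasDerivAt_rpow_const (.inr (by linarith))).const_mul p).congr_deriv ?_
    ring_nf
  have affine (x : ℝ) : HasDerivAt (fun x => p * K ^ (p - 2) * (K + (p - 1) * (x - K)))
      (p * (p - 1) * K ^ (p - 2)) x := by
    refine ((((hasDerivAt_id' x).sub_const K).const_mul (p - 1)).const_add K
      |>.const_mul (p * K ^ (p - 2))).congr_deriv ?_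
    ring
  unfold truncPowDeriv truncPowDeriv2
  exact hasDerivAt_ite_le (a := K) (fun x _ => power x) (fun x _ => affine x)
    (by rw [sub_self, mul_zero, add_zero, mul_assoc, ← Real.rpow_add_one hK.ne']; ring_nf) rfl t

theorem continuous_truncPowDeriv2 (hp : 2 ≤ p) : Continuous (truncPowDeriv2 K p) :=
  (continuous_const.mul (Real.continuous_rpow_const (by linarith))).if_le continuous_const
    continuous_id continuous_const fun x hx => by simp [hx]

theorem contDiff_truncPow (hp : 2 ≤ p) (hK : 0 < K) : ContDiff ℝ 2 (truncPow K p) :=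
  contDiff_two_of_hasDerivAt (hasDerivAt_truncPow (by linarith) hK)
    (hasDerivAt_truncPowDeriv hp hK) (continuous_truncPowDeriv2 hp)

theorem d1_truncPow (hp : 1 ≤ p) (hK : 0 < K) (ht : 0 ≤ t) :
    d1 (truncPow K p) t = truncPowDeriv K p t :=
  d1_eq_of_hasDerivAt (hasDerivAt_truncPow hp hK t) ht

theorem d2_truncPow (hp : 2 ≤ p) (hK : 0 < K) (ht : 0 ≤ t) :
    d2 (truncPow K p) t = truncPowDeriv2 K p t :=
  d2_eq_of_hasDerivAt (fun x _ => hasDerivAt_truncPow (by linarith) hK x)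
    (hasDerivAt_truncPowDeriv hp hK t) ht

theorem truncPow_normal_form (hp : 2 ≤ p) (hK : 0 < K) (ht : 0 ≤ t) :
    ∃ m s : ℝ, 0 ≤ m ∧ 0 ≤ s ∧ t = m + s ∧ (0 < t → 0 < m) ∧
      truncPow K p t = m ^ (p - 2) * (m ^ 2 + p * m * s + p * (p - 1) / 2 * s ^ 2) ∧
      truncPowDeriv K p t = p * m ^ (p - 2) * (m + (p - 1) * s) ∧
      truncPowDeriv2 K p t = p * (p - 1) * m ^ (p - 2) ∧
      min (K ^ (p - 2) * t ^ 2) (t ^ p) = m ^ (p - 2) * t ^ 2 := by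
  have hpow := rpow_sub_two_mul_sq ht (p := p) (by linarith)
  rcases le_or_gt t K with htK | htK
  · refine ⟨t, 0, ht, le_rfl, (add_zero t).symm, id, ?_, ?_, ?_, ?_⟩
    · simp [truncPow, htK, hpow]
    · simp [truncPowDeriv, htK, mul_assoc, rpow_sub_two_mul_self ht (p := p) (by linarith)]
    · simp [truncPowDeriv2, htK]
    · rw [← hpow]
      exact min_eq_right (by gcongr)
  · refine ⟨K, t - K, hK.le, by linarith, by ring, fun _ => hK, ?_, ?_, ?_, ?_⟩
    · simp [truncPow, htK.not_ge]
    · simp [truncPowDeriv, htK.not_ge]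
    · simp [truncPowDeriv2, htK.not_ge]
    · rw [← hpow]
      exact min_eq_left (by gcongr)

theorem truncPow_nonneg (hp : 2 ≤ p) (hK : 0 < K) (ht : 0 ≤ t) : 0 ≤ truncPow K p t := by
  have hp1 : 1 ≤ p := by linarith
  obtain ⟨m, s, hm, hs, -, -, hT, -⟩ := truncPow_normal_form hp hK ht
  rw [hT]
  positivity

theorem truncPowDeriv_pos (hp : 2 ≤ p) (hK : 0 < K) (ht : 0 < t) : 0 < truncPowDeriv K p t := by
  have hp1 : 1 ≤ p := by linarith
  obtain ⟨m, s, -, hs, -, hm, -, hT', -⟩ := truncPow_normal_form hp hK ht.le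
  have := hm ht
  rw [hT']
  positivity

theorem truncPowDeriv2_nonneg (hp : 2 ≤ p) (hK : 0 < K) (ht : 0 ≤ t) :
    0 ≤ truncPowDeriv2 K p t := by
  have hp1 : 1 ≤ p := by linarith
  obtain ⟨m, s, hm, -, -, -, -, -, hT'', -⟩ := truncPow_normal_form hp hK ht
  rw [hT'']
  positivity

theorem strictMonoOn_truncPow (hp : 2 ≤ p) (hK : 0 < K) : StrictMonoOn (truncPow K p) (Ici 0) :=
  have hT := hasDerivAt_truncPow (by linarith) hK
  strictMonoOn_of_hasDerivWithinAt_pos (convex_Ici 0)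
    (fun x _ => (hT x).continuousAt.continuousWithinAt) (fun x _ => (hT x).hasDerivWithinAt)
    fun x hx => truncPowDeriv_pos hp hK (by rwa [interior_Ici] at hx)

theorem convexOn_truncPow (hp : 2 ≤ p) (hK : 0 < K) : ConvexOn ℝ (Ici 0) (truncPow K p) :=
  have hT := hasDerivAt_truncPow (by linarith) hK
  convexOn_of_hasDerivWithinAt2_nonneg (convex_Ici 0)
    (fun x _ => (hT x).continuousAt.continuousWithinAt) (fun x _ => (hT x).hasDerivWithinAt)
    (fun x _ => (hasDerivAt_truncPowDeriv hp hK x).hasDerivWithinAt)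
    fun x hx => truncPowDeriv2_nonneg hp hK (interior_subset hx)

theorem truncPow_le_truncPowDeriv_mul (hp : 2 ≤ p) (hK : 0 < K) (ht : 0 ≤ t) :
    truncPow K p t ≤ truncPowDeriv K p t * t := by
  have hp1 : 1 ≤ p := by linarith
  obtain ⟨m, s, hm, hs, rfl, -, hT, hT', -⟩ := truncPow_normal_form hp hK ht
  rw [hT, hT']
  have key : 0 ≤ (p - 1) * m ^ (p - 2) * (m ^ 2 + p * m * s + p / 2 * s ^ 2) := by positivity
  linear_combination key

theorem truncPowDeriv_mul_le (hp : 2 ≤ p) (hK : 0 < K) (ht : 0 ≤ t) :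
    truncPowDeriv K p t * t ≤ p * truncPow K p t := by
  have hp1 : 1 ≤ p := by linarith
  obtain ⟨m, s, hm, hs, rfl, -, hT, hT', -⟩ := truncPow_normal_form hp hK ht
  rw [hT, hT']
  have key : 0 ≤ p * (p - 1) * (p - 2) / 2 * m ^ (p - 2) * s ^ 2 := by positivity
  linear_combination key

theorem truncPowDeriv_le_truncPowDeriv2_mul (hp : 2 ≤ p) (hK : 0 < K) (ht : 0 ≤ t) :
    truncPowDeriv K p t ≤ truncPowDeriv2 K p t * t := by
  obtain ⟨m, s, hm, hs, rfl, -, -, hT', hT'', -⟩ := truncPow_normal_form hp hK ht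
  rw [hT', hT'']
  have key : 0 ≤ p * (p - 2) * m ^ (p - 2) * m := by positivity
  linear_combination key

theorem truncPowDeriv2_mul_le (hp : 2 ≤ p) (hK : 0 < K) (ht : 0 ≤ t) :
    truncPowDeriv2 K p t * t ≤ (p - 1) * truncPowDeriv K p t := by
  have hp1 : 1 ≤ p := by linarith
  obtain ⟨m, s, hm, hs, rfl, -, -, hT', hT'', -⟩ := truncPow_normal_form hp hK ht
  rw [hT', hT'']
  have key : 0 ≤ p * (p - 1) * (p - 2) * m ^ (p - 2) * s := by positivity
  linear_combination key

theorem truncPowDeriv2_mul_sq (hp : 2 ≤ p) (hK : 0 < K) (ht : 0 ≤ t) :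
    truncPowDeriv2 K p t * t ^ 2 = p * (p - 1) * min (K ^ (p - 2) * t ^ 2) (t ^ p) := by
  obtain ⟨m, s, -, -, -, -, -, -, hT'', hmin⟩ := truncPow_normal_form hp hK ht
  rw [hT'', hmin]
  ring

theorem truncPowDeriv2_mul_sq_le (hp : 2 ≤ p) (hK : 0 < K) (ht : 0 ≤ t) :
    truncPowDeriv2 K p t * t ^ 2 ≤ (p - 1) * (truncPowDeriv K p t * t) := by
  have h := mul_le_mul_of_nonneg_right (truncPowDeriv2_mul_le hp hK ht) ht
  linear_combination h

theorem truncPow_add_mul_add_mul_sq_le (hp : 2 ≤ p) (hK : 0 < K) (ht : 0 ≤ t) :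
    truncPow K p t + truncPowDeriv K p t * t + truncPowDeriv2 K p t * t ^ 2 ≤
      3 * p * (p - 1) * min (K ^ (p - 2) * t ^ 2) (t ^ p) := by
  have h₁ := truncPow_le_truncPowDeriv_mul hp hK ht
  have h₂ := mul_le_mul_of_nonneg_right (truncPowDeriv_le_truncPowDeriv2_mul hp hK ht) ht
  have h₃ := truncPowDeriv2_mul_sq hp hK ht
  linear_combination h₁ + 2 * h₂ + 3 * h₃

end

/-- Lemma 3.8 (i),(ii): the truncated power function `T_{q,K}`, a `C²`
function on `[0,∞)` equal to `t^{2q}` for `t ≤ K`, strictly increasing and convex, with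
quantitative growth estimates in which the constant `c` depends only on `q`. -/
theorem exists_truncated_power_function :
    ∀ q : ℝ, 1 ≤ q → ∃ c : ℝ, ∀ K : ℝ, 0 < K → ∃ T : ℝ → ℝ,
      (∀ t, 0 ≤ t → 0 ≤ T t) ∧
      ContDiffOn ℝ 2 T (Set.Ici 0) ∧
      StrictMonoOn T (Set.Ici 0) ∧
      ConvexOn ℝ (Set.Ici 0) T ∧
      (∀ t ∈ Set.Icc 0 K, T t = t ^ (2 * q)) ∧
      (∀ t, 0 ≤ t →
        T t + d1 T t * t + d2 T t * t ^ 2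
          ≤ c * min (K ^ (2 * q - 2) * t ^ 2) (t ^ (2 * q))) ∧
      (∀ t, 0 ≤ t → 0 ≤ d2 T t * t - d1 T t) ∧
      (∀ t, 0 ≤ t → d2 T t * t - d1 T t ≤ 2 * (q - 1) * d1 T t) ∧
      (∀ t, 0 ≤ t → d2 T t * t ^ 2 ≤ c * (d1 T t * t)) ∧
      (∀ t, 0 ≤ t → d1 T t * t ≤ c * T t) := by
  intro q hq
  have hp : 2 ≤ 2 * q := by linarith
  refine ⟨3 * (2 * q) * (2 * q - 1), fun K hK => ⟨truncPow K (2 * q),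
    fun t ht => truncPow_nonneg hp hK ht, (contDiff_truncPow hp hK).contDiffOn,
    strictMonoOn_truncPow hp hK, convexOn_truncPow hp hK, fun t ht => truncPow_of_le ht.2,
    fun t ht => ?_, fun t ht => ?_, fun t ht => ?_, fun t ht => ?_, fun t ht => ?_⟩⟩
  all_goals simp only [d1_truncPow (by linarith : 1 ≤ 2 * q) hK ht, d2_truncPow hp hK ht]
  · exact truncPow_add_mul_add_mul_sq_le hp hK ht
  · exact sub_nonneg.2 (truncPowDeriv_le_truncPowDeriv2_mul hp hK ht)
  · linear_combination truncPowDeriv2_mul_le hp hK ht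
  · have hT' : 0 ≤ truncPowDeriv K (2 * q) t * t :=
      (truncPow_nonneg hp hK ht).trans (truncPow_le_truncPowDeriv_mul hp hK ht)
    exact (truncPowDeriv2_mul_sq_le hp hK ht).trans (mul_le_mul_of_nonneg_right (by nlinarith) hT')
  · exact (truncPowDeriv_mul_le hp hK ht).trans
      (mul_le_mul_of_nonneg_right (by nlinarith) (truncPow_nonneg hp hK ht))
end
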